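/- Let 0 < T < 1, α₁ > 1/2, α₀ + α₁ > 1, and α₀ < (1/2 - α₁)/((1/2 - α₁)·ln(1-T) + 1) + 1/2. Define G(σ) = (σ + α₀ - 1/2)(σ + α₁ - 1/2) - (1-T)^{2σ}(σ - α₀ + 1/2)(σ - α₁ + 1/2). Then G(σ) > 0 for all σ ≥ 1/2 - α₀. -/

import Mathlib

/-! As `log (1-T) < 0`, the bound on `α₀` forces `α₀ < 1/2`. With
`a = α₀ - 1/2 < 0 < b = α₁ - 1/2`, `G σ` is `(σ + a)(σ + b) - (1-T)^{2σ} (σ - a)(σ - b)`.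
While `σ < b` the subtracted product is negative and the first one is nonnegative.
Once `σ ≥ b > 0` both products are nonnegative, `(1-T)^{2σ} ≤ 1`, and
`(σ + a)(σ + b) - (σ - a)(σ - b) = 2σ(a + b) > 0`. -/

open Real

lemma div_mul_add_one_neg {c L : ℝ} (hc : c < 0) (hL : L ≤ 0) : c / (c * L + 1) < 0 :=
  div_neg_of_neg_of_pos hc (by linarith [mul_nonneg_of_nonpos_of_nonpos hc.le hL])

lemma mul_sub_rpow_mul_pos {r a b σ : ℝ} (hr0 : 0 < r) (hr1 : r ≤ 1) (ha : a < 0)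
    (hab : 0 < a + b) (hσ : -a ≤ σ) :
    0 < (σ + a) * (σ + b) - r ^ (2 * σ) * ((σ - a) * (σ - b)) := by
  have hq : 0 < r ^ (2 * σ) := rpow_pos_of_pos hr0 _
  rcases lt_or_ge σ b with hσb | hbσ
  · have hneg : (σ - a) * (σ - b) < 0 := mul_neg_of_pos_of_neg (by linarith) (by linarith)
    have hnonneg : 0 ≤ (σ + a) * (σ + b) := mul_nonneg (by linarith) (by linarith)
    linarith [mul_neg_of_pos_of_neg hq hneg]
  · have hσ0 : 0 < σ := by linarith
    have hq1 : r ^ (2 * σ) ≤ 1 := rpow_le_one hr0.le hr1 (by positivity)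
    have hprod : 0 ≤ (σ - a) * (σ - b) := mul_nonneg (by linarith) (by linarith)
    refine sub_pos.mpr ?_
    calc r ^ (2 * σ) * ((σ - a) * (σ - b)) ≤ (σ - a) * (σ - b) :=
          mul_le_of_le_one_left hprod hq1
      _ < (σ + a) * (σ + b) := by linear_combination 2 * mul_pos hσ0 hab

theorem stmt_2 (T α₀ α₁ : ℝ) (hT0 : 0 < T) (hT1 : T < 1) (hα₁ : 1/2 < α₁)
    (hsum : α₀ + α₁ > 1)
    (hα₀ : α₀ < (1/2 - α₁) / ((1/2 - α₁) * Real.log (1-T) + 1) + 1/2)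
    (G : ℝ → ℝ)
    (hG : G = fun σ => (σ + α₀ - 1/2) * (σ + α₁ - 1/2)
      - (1-T) ^ (2*σ) * ((σ - α₀ + 1/2) * (σ - α₁ + 1/2))) :
    ∀ σ ≥ 1/2 - α₀, G σ > 0 := by
  intro σ hσ
  subst hG
  have hlog : log (1 - T) ≤ 0 := log_nonpos (by linarith) (by linarith)
  have hα₀_lt_half : α₀ < 1/2 := by
    linarith [div_mul_add_one_neg (by linarith : 1/2 - α₁ < 0) hlog]
  have key := mul_sub_rpow_mul_pos (r := 1 - T) (a := α₀ - 1/2) (b := α₁ - 1/2) (σ := σ)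
    (by linarith) (by linarith) (by linarith) (by linarith) (by linarith)
  beta_reduce
  linear_combination key
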